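/- Let [n] = I ∪ J be a partition into disjoint sets and W ⊆ ℝⁿ a linear subspace. For every x ∈ ℝ^I, the linear system 'w ∈ W, w_I ∈ (π_I(W))⊥ + x, w_J ∈ π_J(W⊥)' has a unique solution w ∈ ℝⁿ, and this solution equals L_I^W(x), the minimum-norm element of {w ∈ W : w_I = Π_{π_I(W)}(x)}. Moreover, x ↦ L_I^W(x) and x ↦ ℓ_I^W(x) = (L_I^W(x))_J are linear maps, and (π_I(W))⊥ ⊆ ker(L_I^W). -/

import Mathlib

/-!
Put `U = W ⊓ ker π_I`. The map `π_I` is injective on `K = W ⊓ Uᗮ` and maps it onto `π_I(W)`, so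
`L_I^W(x)` is the unique preimage in `K` of the projection of `x` onto `π_I(W)`. Any other
`w ∈ W` with the same image differs from it by an element of `U`, so by Pythagoras it is the
element of minimum norm. Finally, the condition `w_J ∈ π_J(Wᗮ)` says exactly that `w ∈ Uᗮ`,
since `Uᗮ = Wᗮ + (ker π_I)ᗮ` and `(ker π_I)ᗮ = ker π_J` for a partition `[n] = I ∪ J`.
-/

open scoped RealInnerProductSpace

/-- The coordinate projection `π_I : ℝⁿ → ℝ^I` as a linear map. -/
noncomputable def coordRestrict {n : ℕ} (I : Finset (Fin n)) :
    EuclideanSpace ℝ (Fin n) →ₗ[ℝ] EuclideanSpace ℝ {i : Fin n // i ∈ I} where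
  toFun x := WithLp.toLp 2 (fun i => x i.1)
  map_add' _ _ := rfl
  map_smul' _ _ := rfl

open Submodule LinearMap

theorem Submodule.sub_mem_orthogonal_iff_starProjection_eq {E : Type*} [NormedAddCommGroup E]
    [InnerProductSpace ℝ E] {K : Submodule ℝ E} [K.HasOrthogonalProjection] {u v : E}
    (hv : v ∈ K) : v - u ∈ Kᗮ ↔ K.starProjection u = v := by
  refine ⟨fun h => eq_starProjection_of_mem_orthogonal hv ?_, fun h => ?_⟩
  · simpa using Kᗮ.neg_mem h
  · simpa [← h] using Kᗮ.neg_mem (sub_starProjection_mem_orthogonal (K := K) u)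

namespace LinearMap

variable {E F : Type*} [NormedAddCommGroup E] [InnerProductSpace ℝ E]
  [NormedAddCommGroup F] [InnerProductSpace ℝ F] (f : E →ₗ[ℝ] F) (W : Submodule ℝ E)

theorem injOn_inf_orthogonal_inf_ker :
    Set.InjOn f (W ⊓ (W ⊓ ker f)ᗮ : Submodule ℝ E) := by
  intro a ha b hb hab
  have hmem : a - b ∈ W ⊓ ker f := ⟨W.sub_mem ha.1 hb.1, by simp [hab]⟩
  have horth : a - b ∈ (W ⊓ ker f)ᗮ := sub_mem ha.2 hb.2
  exact sub_eq_zero.mp (inner_self_eq_zero.mp (horth _ hmem))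

variable [FiniteDimensional ℝ E]

theorem map_inf_orthogonal_inf_ker : (W ⊓ (W ⊓ ker f)ᗮ).map f = W.map f := by
  conv_rhs => rw [← sup_orthogonal_inf_of_hasOrthogonalProjection (inf_le_left : W ⊓ ker f ≤ W)]
  rw [Submodule.map_sup, inf_comm _ W, le_ker_iff_map.mp inf_le_right, bot_sup_eq]

noncomputable def infOrthogonalInfKerEquivMap :
    (W ⊓ (W ⊓ ker f)ᗮ : Submodule ℝ E) ≃ₗ[ℝ] W.map f :=
  .ofBijective
    ((f.domRestrict (W ⊓ (W ⊓ ker f)ᗮ)).codRestrict (W.map f) fun k => mem_map_of_mem k.2.1)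
    ⟨fun a b h => Subtype.ext (injOn_inf_orthogonal_inf_ker f W a.2 b.2 (congrArg Subtype.val h)),
      by
        rintro ⟨y, hy⟩
        rw [← map_inf_orthogonal_inf_ker f W] at hy
        obtain ⟨k, hk, rfl⟩ := hy
        exact ⟨⟨k, hk⟩, rfl⟩⟩

/-- For `f = π_I` this is the lifting map `L_I^W`. -/
noncomputable def minNormLift : F →ₗ[ℝ] E :=
  (W ⊓ (W ⊓ ker f)ᗮ).subtype ∘ₗ (infOrthogonalInfKerEquivMap f W).symm.toLinearMap ∘ₗ
    (W.map f).orthogonalProjectionOnto.toLinearMap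

variable {f W}

theorem minNormLift_mem (x : F) : f.minNormLift W x ∈ W ⊓ (W ⊓ ker f)ᗮ :=
  ((infOrthogonalInfKerEquivMap f W).symm _).2

theorem map_minNormLift (x : F) : f (f.minNormLift W x) = (W.map f).starProjection x := by
  rw [starProjection_apply]
  exact congrArg Subtype.val
    ((infOrthogonalInfKerEquivMap f W).apply_symm_apply ((W.map f).orthogonalProjectionOnto x))

theorem eq_minNormLift_of_mem {x : F} {w : E} (hw : w ∈ W ⊓ (W ⊓ ker f)ᗮ)
    (hwx : f w = (W.map f).starProjection x) : w = f.minNormLift W x :=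
  injOn_inf_orthogonal_inf_ker f W hw (minNormLift_mem x) (by rw [hwx, map_minNormLift])

theorem norm_sq_eq_norm_minNormLift_sq_add {x : F} {w : E} (hw : w ∈ W)
    (hwx : f w = (W.map f).starProjection x) :
    ‖w‖ ^ 2 = ‖f.minNormLift W x‖ ^ 2 + ‖w - f.minNormLift W x‖ ^ 2 := by
  have hker : w - f.minNormLift W x ∈ W ⊓ ker f :=
    ⟨W.sub_mem hw (minNormLift_mem x).1, by simp [hwx, map_minNormLift]⟩
  have := norm_add_sq_eq_norm_sq_add_norm_sq_real ((minNormLift_mem x).2 _ hker)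
  rw [sub_add_cancel] at this
  rw [sq, sq, sq, this, add_comm]

theorem norm_minNormLift_le {x : F} {w : E} (hw : w ∈ W)
    (hwx : f w = (W.map f).starProjection x) : ‖f.minNormLift W x‖ ≤ ‖w‖ := by
  have := norm_sq_eq_norm_minNormLift_sq_add hw hwx
  exact le_of_sq_le_sq (by nlinarith [sq_nonneg ‖w - f.minNormLift W x‖]) (norm_nonneg _)

theorem eq_minNormLift_of_norm_le {x : F} {w : E} (hw : w ∈ W)
    (hwx : f w = (W.map f).starProjection x) (hle : ‖w‖ ≤ ‖f.minNormLift W x‖) :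
    w = f.minNormLift W x := by
  have := norm_sq_eq_norm_minNormLift_sq_add hw hwx
  have : ‖w - f.minNormLift W x‖ ^ 2 = 0 := by
    nlinarith [norm_nonneg w, sq_nonneg ‖w - f.minNormLift W x‖]
  simpa [sub_eq_zero] using this

theorem minNormLift_eq_zero_of_mem_orthogonal {x : F} (hx : x ∈ (W.map f)ᗮ) :
    f.minNormLift W x = 0 := by
  simp [minNormLift, orthogonalProjectionOnto_apply_of_mem_orthogonal hx]

end LinearMap

section coordRestrict

variable {n : ℕ}

theorem mem_ker_coordRestrict {I : Finset (Fin n)} {x : EuclideanSpace ℝ (Fin n)} :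
    x ∈ ker (coordRestrict I) ↔ ∀ i ∈ I, x i = 0 := by
  rw [mem_ker]
  exact ⟨fun h i hi => congrArg (· ⟨i, hi⟩) h, fun h => PiLp.ext fun i => h i.1 i.2⟩

theorem ker_coordRestrict_le_orthogonal {I J : Finset (Fin n)} (hIJ : I ∪ J = Finset.univ) :
    ker (coordRestrict J) ≤ (ker (coordRestrict I))ᗮ := by
  intro u hu v hv
  rw [mem_ker_coordRestrict] at hu hv
  refine Finset.sum_eq_zero fun i _ => ?_
  rcases Finset.mem_union.mp (hIJ ▸ Finset.mem_univ i : i ∈ I ∪ J) with hi | hi <;>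
    simp [hu, hv, hi]

theorem orthogonal_ker_coordRestrict_le {I J : Finset (Fin n)} (hdisj : Disjoint I J) :
    (ker (coordRestrict I))ᗮ ≤ ker (coordRestrict J) := by
  intro s hs
  refine mem_ker_coordRestrict.mpr fun j hj => ?_
  have hsingle : EuclideanSpace.single j (1 : ℝ) ∈ ker (coordRestrict I) :=
    mem_ker_coordRestrict.mpr fun i hi => by
      have hij : i ≠ j := fun h => Finset.disjoint_left.mp hdisj hi (h ▸ hj)
      simp [hij]
  simpa [EuclideanSpace.inner_single_left] using hs _ hsingle

theorem orthogonal_ker_coordRestrict {I J : Finset (Fin n)} (hIJ : I ∪ J = Finset.univ)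
    (hdisj : Disjoint I J) : (ker (coordRestrict I))ᗮ = ker (coordRestrict J) :=
  le_antisymm (orthogonal_ker_coordRestrict_le hdisj) (ker_coordRestrict_le_orthogonal hIJ)

theorem orthogonal_inf_ker_coordRestrict {I J : Finset (Fin n)} (hIJ : I ∪ J = Finset.univ)
    (hdisj : Disjoint I J) (W : Submodule ℝ (EuclideanSpace ℝ (Fin n))) :
    (W ⊓ ker (coordRestrict I))ᗮ = (Wᗮ.map (coordRestrict J)).comap (coordRestrict J) := by
  have h : (Wᗮ ⊔ (ker (coordRestrict I))ᗮ)ᗮ = W ⊓ ker (coordRestrict I) := by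
    rw [← inf_orthogonal, orthogonal_orthogonal, orthogonal_orthogonal]
  rw [comap_map_eq, ← orthogonal_ker_coordRestrict hIJ hdisj, ← h, orthogonal_orthogonal]

end coordRestrict

theorem statement6 (n : ℕ) (I J : Finset (Fin n))
    (hIJ : I ∪ J = Finset.univ) (hdisj : Disjoint I J)
    (W : Submodule ℝ (EuclideanSpace ℝ (Fin n))) :
    ∃ L : EuclideanSpace ℝ {i : Fin n // i ∈ I} →ₗ[ℝ] EuclideanSpace ℝ (Fin n),
      -- `L x` solves the linear system: `L x ∈ W`, `(L x)_I ∈ (π_I W)ᗮ + x`,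
      -- `(L x)_J ∈ π_J (Wᗮ)`
      (∀ x, L x ∈ W ∧ coordRestrict I (L x) - x ∈ (W.map (coordRestrict I))ᗮ ∧
        coordRestrict J (L x) ∈ Wᗮ.map (coordRestrict J)) ∧
      -- the solution of the linear system is unique
      (∀ x w, w ∈ W → coordRestrict I w - x ∈ (W.map (coordRestrict I))ᗮ →
        coordRestrict J w ∈ Wᗮ.map (coordRestrict J) → w = L x) ∧
      -- `L x` is the minimum-norm element of `{w ∈ W : w_I = Π_{π_I(W)}(x)}`
      (∀ x w, w ∈ W → coordRestrict I w - x ∈ (W.map (coordRestrict I))ᗮ → ‖L x‖ ≤ ‖w‖) ∧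
      (∀ x w, w ∈ W → coordRestrict I w - x ∈ (W.map (coordRestrict I))ᗮ →
        ‖w‖ ≤ ‖L x‖ → w = L x) ∧
      -- `(π_I W)ᗮ ⊆ ker L`
      (∀ x ∈ (W.map (coordRestrict I))ᗮ, L x = 0) := by
  have hsystem {x w} (hw : w ∈ W) : coordRestrict I w - x ∈ (W.map (coordRestrict I))ᗮ ↔
      (W.map (coordRestrict I)).starProjection x = coordRestrict I w :=
    sub_mem_orthogonal_iff_starProjection_eq (mem_map_of_mem hw)
  have hJ {w} : w ∈ (W ⊓ ker (coordRestrict I))ᗮ ↔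
      coordRestrict J w ∈ Wᗮ.map (coordRestrict J) := by
    rw [orthogonal_inf_ker_coordRestrict hIJ hdisj W, mem_comap]
  refine ⟨(coordRestrict I).minNormLift W, fun x => ?_, fun x w hw hwx hwJ => ?_,
    fun x w hw hwx => norm_minNormLift_le hw ((hsystem hw).mp hwx).symm,
    fun x w hw hwx => eq_minNormLift_of_norm_le hw ((hsystem hw).mp hwx).symm,
    fun x => minNormLift_eq_zero_of_mem_orthogonal⟩
  · obtain ⟨hW, hker⟩ := minNormLift_mem (f := coordRestrict I) (W := W) x
    exact ⟨hW, (hsystem hW).mpr (map_minNormLift x).symm, hJ.mp hker⟩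
  · exact eq_minNormLift_of_mem ⟨hw, hJ.mpr hwJ⟩ ((hsystem hw).mp hwx).symm
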